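/- arXiv:2108.08842 — 2 statements merged into one kernel-verified Lean document; each statement's English description precedes it below -/
import Mathlib

section
/- With the two-level quantizer Q(v) = ψ·sign(v) and unbiased scale S = ||x||_2^2/⟨Rx,Q(Rx)⟩, the normalized squared error ||x − S·R^{-1}Q(Rx)||_2^2 / ||x||_2^2 equals d·||x||_2^2/||Rx||_1^2 − 1, which depends only on the unit vector Rx/||Rx||_2; in particular it equals d/||T||_1^2 − 1 where T = Rx/||x||_2. -/
open Matrix RealInnerProductSpace

/-- The ±1 sign with the convention `sign 0 = +1`. -/
noncomputable def psign (y : ℝ) : ℝ := if 0 ≤ y then 1 else -1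

/-- Coordinatewise sign vector. -/
noncomputable def signVec {d : ℕ} (v : EuclideanSpace ℝ (Fin d)) :
    EuclideanSpace ℝ (Fin d) := WithLp.toLp 2 (fun i => psign (v i))

/-!
Since `R` is an isometry with `R * R⁻¹ = 1`, the error vector has the norm of `Rx - S • Q(Rx)`.
For any `y`, `q` with `⟪y, q⟫ ≠ 0`, the unbiased scale `S = ‖y‖² / ⟪y, q⟫` gives squared error
`‖y‖⁴ ‖q‖² / ⟪y, q⟫² - ‖y‖²`; for `q = ψ • sign y` one has `⟪y, q⟫ = ψ ‖y‖₁` and `‖q‖² = ψ² d`.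
-/

lemma mul_psign_self (y : ℝ) : y * psign y = |y| := by
  unfold psign
  split_ifs with h
  · rw [mul_one, abs_of_nonneg h]
  · rw [mul_neg_one, abs_of_neg (not_le.mp h)]

lemma psign_sq (y : ℝ) : psign y ^ 2 = 1 := by
  unfold psign
  split_ifs <;> norm_num

lemma inner_signVec {d : ℕ} (v : EuclideanSpace ℝ (Fin d)) :
    ⟪v, signVec v⟫ = ∑ i, |v i| := by
  simp only [PiLp.inner_apply, signVec, RCLike.inner_apply, conj_trivial, mul_comm _ (v _),
    mul_psign_self]

lemma norm_signVec_sq {d : ℕ} (v : EuclideanSpace ℝ (Fin d)) : ‖signVec v‖ ^ 2 = d := by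
  simp [EuclideanSpace.real_norm_sq_eq, signVec, psign_sq]

lemma sum_abs_pos {ι : Type*} [Fintype ι] {v : EuclideanSpace ℝ ι} (hv : v ≠ 0) :
    0 < ∑ i, |v i| := by
  obtain ⟨i, hi⟩ : ∃ i, v i ≠ 0 := by
    by_contra! h
    exact hv (PiLp.ext h)
  exact Finset.sum_pos' (fun j _ => abs_nonneg (v j)) ⟨i, Finset.mem_univ i, abs_pos.mpr hi⟩

lemma sum_abs_smul {ι : Type*} [Fintype ι] (c : ℝ) (v : EuclideanSpace ℝ ι) :
    ∑ i, |(c • v) i| = |c| * ∑ i, |v i| := by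
  simp only [PiLp.smul_apply, smul_eq_mul, abs_mul, Finset.mul_sum]

lemma norm_toEuclideanLin_of_transpose_mul_self {ι : Type*} [Fintype ι] [DecidableEq ι]
    {M : Matrix ι ι ℝ} (hM : Mᵀ * M = 1) (v : EuclideanSpace ℝ ι) :
    ‖toEuclideanLin M v‖ = ‖v‖ := by
  have h : ContinuousLinearMap.adjoint (toEuclideanCLM (n := ι) (𝕜 := ℝ) M) ∘L
      toEuclideanCLM (n := ι) (𝕜 := ℝ) M = 1 := by
    rw [← ContinuousLinearMap.star_eq_adjoint, ← map_star, ← ContinuousLinearMap.mul_def, ← map_mul,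
      star_eq_conjTranspose, conjTranspose_eq_transpose_of_trivial, hM, map_one]
  exact (toEuclideanCLM (n := ι) (𝕜 := ℝ) M).norm_map_iff_adjoint_comp_self.mpr h v

lemma norm_sub_unbiased_smul_sq {E : Type*} [NormedAddCommGroup E] [InnerProductSpace ℝ E]
    (y q : E) (h : ⟪y, q⟫ ≠ 0) :
    ‖y - (‖y‖ ^ 2 / ⟪y, q⟫) • q‖ ^ 2 = ‖y‖ ^ 4 * ‖q‖ ^ 2 / ⟪y, q⟫ ^ 2 - ‖y‖ ^ 2 := by
  rw [norm_sub_sq_real, real_inner_smul_right, norm_smul, Real.norm_eq_abs, mul_pow, sq_abs]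
  field_simp
  ring

lemma norm_sub_twoLevel_div_norm_sq {d : ℕ} {y : EuclideanSpace ℝ (Fin d)} (hy : y ≠ 0)
    {ψ : ℝ} (hψ : ψ ≠ 0) :
    ‖y - (‖y‖ ^ 2 / ⟪y, ψ • signVec y⟫) • (ψ • signVec y)‖ ^ 2 / ‖y‖ ^ 2 =
      d * ‖y‖ ^ 2 / (∑ i, |y i|) ^ 2 - 1 := by
  have hL := (sum_abs_pos hy).ne'
  have hinner : ⟪y, ψ • signVec y⟫ = ψ * ∑ i, |y i| := by
    rw [real_inner_smul_right, inner_signVec]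
  rw [norm_sub_unbiased_smul_sq _ _ (hinner ▸ mul_ne_zero hψ hL), hinner, norm_smul, mul_pow,
    norm_signVec_sq, Real.norm_eq_abs, sq_abs]
  have := norm_ne_zero_iff.mpr hy
  field_simp

lemma mul_norm_sq_div_sum_abs_sq {ι : Type*} [Fintype ι] (c : ℝ) (y : EuclideanSpace ℝ ι) :
    c * ‖y‖ ^ 2 / (∑ i, |y i|) ^ 2 = c / (∑ i, |(‖y‖⁻¹ • y) i|) ^ 2 := by
  rw [sum_abs_smul, abs_inv, abs_norm, mul_pow, inv_pow, div_mul_eq_div_div, div_inv_eq_mul]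

theorem drive_two_level_vnmse_general (d : ℕ) (R : Matrix (Fin d) (Fin d) ℝ)
    (hR : Rᵀ * R = 1) (x : EuclideanSpace ℝ (Fin d)) (hx : x ≠ 0)
    (ψ : ℝ) (hψ : 0 < ψ) :
    let Rx := Matrix.toEuclideanLin R x
    let Qv : EuclideanSpace ℝ (Fin d) := ψ • signVec Rx
    let S : ℝ := ‖x‖ ^ 2 / ⟪Rx, Qv⟫
    let T : EuclideanSpace ℝ (Fin d) := ‖x‖⁻¹ • Rx
    ‖x - S • Matrix.toEuclideanLin R⁻¹ Qv‖ ^ 2 / ‖x‖ ^ 2 =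
        d * ‖x‖ ^ 2 / (∑ i : Fin d, |Rx i|) ^ 2 - 1 ∧
      ‖x - S • Matrix.toEuclideanLin R⁻¹ Qv‖ ^ 2 / ‖x‖ ^ 2 =
        d / (∑ i : Fin d, |T i|) ^ 2 - 1 := by
  intro Rx Qv S T
  have hnorm : ‖Rx‖ = ‖x‖ := norm_toEuclideanLin_of_transpose_mul_self hR x
  have hRx : Rx ≠ 0 := norm_ne_zero_iff.mp (hnorm ▸ norm_ne_zero_iff.mpr hx)
  have herr : ‖x - S • toEuclideanLin R⁻¹ Qv‖ = ‖Rx - S • Qv‖ := by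
    rw [← norm_toEuclideanLin_of_transpose_mul_self hR, map_sub, map_smul]
    have hRRinv : R * R⁻¹ = 1 := mul_nonsing_inv R (isUnit_det_of_left_inverse hR)
    simp [Rx, toLpLin_apply, mulVec_mulVec, hRRinv]
  have hrotated := norm_sub_twoLevel_div_norm_sq hRx hψ.ne'
  rw [hnorm] at hrotated
  rw [herr]
  refine ⟨hrotated, hrotated.trans ?_⟩
  rw [← hnorm, mul_norm_sq_div_sum_abs_sq, hnorm]

theorem drive_two_level_vnmse (d : ℕ) (R : Matrix (Fin d) (Fin d) ℝ)
    (hR : Rᵀ * R = 1) (x : EuclideanSpace ℝ (Fin d)) (hx : x ≠ 0)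
    (ψ : ℝ) (hψ : 0 < ψ)
    (hnz : ∀ i : Fin d, Matrix.toEuclideanLin R x i ≠ 0) :
    let Rx := Matrix.toEuclideanLin R x
    let Qv : EuclideanSpace ℝ (Fin d) := ψ • signVec Rx
    let S : ℝ := ‖x‖ ^ 2 / ⟪Rx, Qv⟫
    let T : EuclideanSpace ℝ (Fin d) := ‖x‖⁻¹ • Rx
    ‖x - S • Matrix.toEuclideanLin R⁻¹ Qv‖ ^ 2 / ‖x‖ ^ 2 =
        d * ‖x‖ ^ 2 / (∑ i : Fin d, |Rx i|) ^ 2 - 1 ∧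
      ‖x - S • Matrix.toEuclideanLin R⁻¹ Qv‖ ^ 2 / ‖x‖ ^ 2 =
        d / (∑ i : Fin d, |T i|) ^ 2 - 1 :=
  drive_two_level_vnmse_general d R hR x hx ψ hψ
end

section
/- In the setting of the unbiasedness theorem, fix x ∈ R^d and let x' = (||x||_2, 0, …, 0)^T and R_{x→x'} a fixed rotation with R_{x→x'}x = x'. Writing R_x = R·R_{x→x'}^{-1} with columns C_0,…,C_{d−1}, the DRIVE estimate equals x̂ = R_{x→x'}^{-1} · ||x||_2 · (1, ⟨C_1, Q(||x||_2 C_0)⟩/⟨C_0, Q(||x||_2 C_0)⟩, …, ⟨C_{d−1}, Q(||x||_2 C_0)⟩/⟨C_0, Q(||x||_2 C_0)⟩)^T. -/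
/-!
Since `R = R_x * R_{x→x'}` and `R_{x→x'} x = ‖x‖ e₀`, the rotated vector is `R x = ‖x‖ C₀`, so
`S = ‖x‖ / ⟪C₀, q⟫` with `q = Q (‖x‖ C₀)`. Orthogonality gives `R⁻¹ = R_{x→x'}⁻¹ * R_xᵀ`, and the
`j`-th coordinate of `R_xᵀ q` is `⟪C_j, q⟫`; at `j = 0` the factor `S` cancels it to `‖x‖`.
-/

open Matrix RealInnerProductSpace

namespace Matrix

variable {𝕜 m n : Type*} [RCLike 𝕜] [Fintype n] [DecidableEq n]

lemma toEuclideanLin_single (A : Matrix m n 𝕜) (i : n) (a : 𝕜) :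
    toEuclideanLin A (WithLp.toLp 2 fun j => if j = i then a else 0) =
      a • WithLp.toLp 2 fun j => A j i := by
  ext j
  simp [toLpLin_apply, mulVec, dotProduct, mul_comm]

lemma toEuclideanLin_conjTranspose_apply (A : Matrix n m 𝕜) (v : EuclideanSpace 𝕜 n) (i : m) :
    toEuclideanLin Aᴴ v i = inner 𝕜 (WithLp.toLp 2 fun j => A j i : EuclideanSpace 𝕜 n) v := by
  simp [toLpLin_apply, mulVec, dotProduct, PiLp.inner_apply, mul_comm]

end Matrix

theorem drive_column_representation (d : ℕ) (hd : 0 < d)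
    (R : Matrix (Fin d) (Fin d) ℝ) (hR : Rᵀ * R = 1)
    (Rxx' : Matrix (Fin d) (Fin d) ℝ) (hRxx' : Rxx'ᵀ * Rxx' = 1)
    (x : EuclideanSpace ℝ (Fin d))
    (hx' : Matrix.toEuclideanLin Rxx' x =
      (WithLp.toLp 2 (fun j => if j = (⟨0, hd⟩ : Fin d) then ‖x‖ else 0) : EuclideanSpace ℝ (Fin d)))
    (Q : EuclideanSpace ℝ (Fin d) → EuclideanSpace ℝ (Fin d))
    (hip : ⟪Matrix.toEuclideanLin R x, Q (Matrix.toEuclideanLin R x)⟫ ≠ 0) :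
    let Rx : Matrix (Fin d) (Fin d) ℝ := R * Rxx'⁻¹
    let C : Fin d → EuclideanSpace ℝ (Fin d) := fun i => WithLp.toLp 2 (fun j => Rx j i)
    let S : ℝ := ‖x‖ ^ 2 / ⟪Matrix.toEuclideanLin R x, Q (Matrix.toEuclideanLin R x)⟫
    S • Matrix.toEuclideanLin R⁻¹ (Q (Matrix.toEuclideanLin R x)) =
      Matrix.toEuclideanLin Rxx'⁻¹
        (‖x‖ • (WithLp.toLp 2 (fun j => if j = (⟨0, hd⟩ : Fin d) then 1 else
          ⟪C j, Q (‖x‖ • C ⟨0, hd⟩)⟫ / ⟪C ⟨0, hd⟩, Q (‖x‖ • C ⟨0, hd⟩)⟫) :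
            EuclideanSpace ℝ (Fin d))) := by
  intro Rx C S
  have hRxx'_inv : Rxx'⁻¹ = Rxx'ᵀ := inv_eq_left_inv hRxx'
  have hR_eq : R = Rx * Rxx' := by
    simp only [Rx, hRxx'_inv, Matrix.mul_assoc, hRxx', Matrix.mul_one]
  have hR_inv : R⁻¹ = Rxx'⁻¹ * Rxᴴ := by
    rw [inv_eq_left_inv hR, conjTranspose_eq_transpose_of_trivial, hRxx'_inv, ← transpose_mul,
      ← hR_eq]
  have hRx : toEuclideanLin R x = ‖x‖ • C ⟨0, hd⟩ := by
    rw [hR_eq, toLpLin_mul_same, LinearMap.comp_apply, hx', toEuclideanLin_single]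
  rw [hRx, real_inner_smul_left] at hip
  obtain ⟨hx, hC₀⟩ := mul_ne_zero_iff.mp hip
  have hS : S = ‖x‖ / ⟪C ⟨0, hd⟩, Q (‖x‖ • C ⟨0, hd⟩)⟫ := by
    simp only [S, hRx, real_inner_smul_left]
    field_simp
  rw [hS, hRx, hR_inv, toLpLin_mul_same, LinearMap.comp_apply, ← map_smul]
  congr 1
  ext j
  simp only [PiLp.smul_apply, smul_eq_mul, toEuclideanLin_conjTranspose_apply]
  split_ifs with hj
  · subst hj
    exact (div_mul_cancel₀ _ hC₀).trans (mul_one _).symm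
  · exact (div_mul_eq_mul_div _ _ _).trans (mul_div_assoc _ _ _)
end
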